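/- Let Γ be a group equipped with a finitely-additive probability measure m that is simultaneously left invariant, right invariant and inverse invariant, and let f : Γ → Sym(n) be a symmetric function with uniform local defect δ_∞ = defect_∞(f). Then for every ε > 0 and every γ ∈ Γ, |{ x ∈ [n] : w(x →γ→ f(γ)(x)) > 1 − ε }| ≥ (1 − δ_∞/ε)·n. -/

import Mathlib

/-!
A fixed `t ∈ Γ` fails to support `x →γ→ f γ x` exactly when `f γ` and `f t * f (t⁻¹ * γ)`
disagree at `x`, which happens for at most `δ_∞ n` points `x`. Integrating this count over `t`
(finite additivity, after partitioning `Γ` by the set of points each `t` fails to support) gives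
`∑ₓ (1 - w(x →γ→ f γ x)) ≤ δ_∞ n`, and Markov's inequality bounds the number of `x` of weight
at most `1 - ε` by `δ_∞ n / ε`.
-/

open Finset

/-- Extend a permutation of `Fin n` to a partial function `ℕ → Option ℕ`
(`none` playing the role of the dummy symbol `⋆`). -/
def permExt {n : ℕ} (σ : Equiv.Perm (Fin n)) : ℕ → Option ℕ :=
  fun x => if h : x < n then some ((σ ⟨x, h⟩ : Fin n) : ℕ) else none

/-- The (extended) normalized Hamming distance between permutations of possibly
different sizes.  For `n = N` it is `|{x : σ x ≠ τ x}| / n`; for `n ≤ N` it is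
`(|{x ∈ [n] : σ x ≠ τ x}| + (N - n)) / N`. -/
noncomputable def dH {n N : ℕ} (σ : Equiv.Perm (Fin n)) (τ : Equiv.Perm (Fin N)) : ℝ :=
  (((Finset.range (max n N)).filter fun x => permExt σ x ≠ permExt τ x).card : ℝ)
    / ((max n N : ℕ) : ℝ)

/-- The uniform local defect of a map into a symmetric group. -/
noncomputable def defectInfty {Γ : Type*} [Group Γ] {n : ℕ}
    (f : Γ → Equiv.Perm (Fin n)) : ℝ :=
  ⨆ p : Γ × Γ, dH (f (p.1 * p.2)) (f p.1 * f p.2)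

/-- The uniform distance between two maps into (possibly different) symmetric groups. -/
noncomputable def dInfty {Γ : Type*} {n N : ℕ}
    (f : Γ → Equiv.Perm (Fin n)) (h : Γ → Equiv.Perm (Fin N)) : ℝ :=
  ⨆ γ : Γ, dH (f γ) (h γ)

/-- A finitely-additive probability measure on (the power set of) `Γ`. -/
def IsFinAddProb {Γ : Type*} (m : Set Γ → ℝ) : Prop :=
  (∀ A : Set Γ, 0 ≤ m A ∧ m A ≤ 1) ∧ m Set.univ = 1 ∧
    ∀ A B : Set Γ, Disjoint A B → m (A ∪ B) = m A + m B

/-- Left invariance of a finitely-additive measure. -/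
def LeftInvariant {Γ : Type*} [Group Γ] (m : Set Γ → ℝ) : Prop :=
  ∀ (γ : Γ) (A : Set Γ), m ((fun a => γ * a) '' A) = m A

/-- Right invariance of a finitely-additive measure. -/
def RightInvariant {Γ : Type*} [Group Γ] (m : Set Γ → ℝ) : Prop :=
  ∀ (γ : Γ) (A : Set Γ), m ((fun a => a * γ) '' A) = m A

/-- Inverse invariance of a finitely-additive measure. -/
def InvInvariant {Γ : Type*} [Group Γ] (m : Set Γ → ℝ) : Prop :=
  ∀ A : Set Γ, m A⁻¹ = m A

/-- A discrete group is amenable if it admits a left-invariant finitely-additive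
probability measure. -/
def IsAmenable (Γ : Type*) [Group Γ] : Prop :=
  ∃ m : Set Γ → ℝ, IsFinAddProb m ∧ LeftInvariant m

/-- A function between groups is symmetric if it sends `1 ↦ 1` and respects inverses. -/
def IsSymmetricMap {Γ G : Type*} [Group Γ] [Group G] (f : Γ → G) : Prop :=
  f 1 = 1 ∧ ∀ γ : Γ, f γ⁻¹ = (f γ)⁻¹

/-- The weight `w(x →γ→ y)` : the measure of the set of supporters
`T(x →γ→ y) = { t : f(t)(f(t⁻¹γ)(x)) = y }`. -/
def weight {Γ : Type*} [Group Γ] {n : ℕ} (m : Set Γ → ℝ)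
    (f : Γ → Equiv.Perm (Fin n)) (x : Fin n) (γ : Γ) (y : Fin n) : ℝ :=
  m { t : Γ | f t (f (t⁻¹ * γ) x) = y }

namespace IsFinAddProb

variable {Γ : Type*} {m : Set Γ → ℝ}

lemma nonneg (hm : IsFinAddProb m) (A : Set Γ) : 0 ≤ m A := (hm.1 A).1

lemma measure_empty (hm : IsFinAddProb m) : m ∅ = 0 := by
  have h := hm.2.2 ∅ ∅ (Set.disjoint_empty _)
  rw [Set.union_empty] at h
  linarith

lemma measure_compl (hm : IsFinAddProb m) (A : Set Γ) : m Aᶜ = 1 - m A := by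
  have h := hm.2.2 A Aᶜ disjoint_compl_right
  rw [Set.union_compl_self, hm.2.1] at h
  linarith

lemma measure_preimage_finset (hm : IsFinAddProb m) {β : Type*} [DecidableEq β]
    (g : Γ → β) (s : Finset β) : m (g ⁻¹' s) = ∑ b ∈ s, m (g ⁻¹' {b}) := by
  induction s using Finset.induction with
  | empty => simpa using hm.measure_empty
  | insert b s hb ih =>
    rw [Finset.coe_insert, Set.insert_eq, Set.preimage_union,
      hm.2.2 _ _ ((Set.disjoint_singleton_left.mpr hb).preimage g), ih, Finset.sum_insert hb]

lemma sum_measure_le_of_forall_card_le (hm : IsFinAddProb m) {ι : Type*} [Fintype ι]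
    [DecidableEq ι] (A : ι → Set Γ) (C : ℝ) [∀ x t, Decidable (t ∈ A x)]
    (hC : ∀ t, (#{x | t ∈ A x} : ℝ) ≤ C) : ∑ x, m (A x) ≤ C := by
  set pattern : Γ → Finset ι := fun t => {x | t ∈ A x}
  have hA : ∀ x, A x = pattern ⁻¹' ↑({S | x ∈ S} : Finset (Finset ι)) := by
    intro x; ext t; simp [pattern]
  have hfiber : ∀ S : Finset ι, (#S : ℝ) * m (pattern ⁻¹' {S}) ≤ C * m (pattern ⁻¹' {S}) := by
    intro S
    rcases (pattern ⁻¹' {S}).eq_empty_or_nonempty with hS | ⟨t, rfl⟩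
    · simp [hS, hm.measure_empty]
    · exact mul_le_mul_of_nonneg_right (hC t) (hm.nonneg _)
  calc ∑ x, m (A x)
      = ∑ x, ∑ S : Finset ι, if x ∈ S then m (pattern ⁻¹' {S}) else 0 := by
        simp_rw [hA, hm.measure_preimage_finset, Finset.sum_filter]
    _ = ∑ S : Finset ι, (#S : ℝ) * m (pattern ⁻¹' {S}) := by
        rw [Finset.sum_comm]
        simp
    _ ≤ ∑ S : Finset ι, C * m (pattern ⁻¹' {S}) := Finset.sum_le_sum fun S _ => hfiber S
    _ = C := by
        rw [← Finset.mul_sum, ← hm.measure_preimage_finset, Finset.coe_univ,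
          Set.preimage_univ, hm.2.1, mul_one]

end IsFinAddProb

section HammingDistance

variable {n : ℕ}

lemma dH_le_one {N : ℕ} (σ : Equiv.Perm (Fin n)) (τ : Equiv.Perm (Fin N)) : dH σ τ ≤ 1 := by
  unfold dH
  apply div_le_one_of_le₀ _ (Nat.cast_nonneg _)
  exact_mod_cast (Finset.card_filter_le _ _).trans (Finset.card_range _).le

lemma card_ne_eq_dH_mul (σ τ : Equiv.Perm (Fin n)) :
    (#{x | σ x ≠ τ x} : ℝ) = dH σ τ * n := by
  rcases Nat.eq_zero_or_pos n with rfl | hn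
  · simp
  have hcard : #{x | σ x ≠ τ x} = #{x ∈ range n | permExt σ x ≠ permExt τ x} := by
    simp only [Finset.card_filter]
    rw [← Fin.sum_univ_eq_sum_range (fun x => if permExt σ x ≠ permExt τ x then 1 else 0)]
    simp [permExt, Fin.val_eq_val]
  rw [dH, max_self, hcard, div_mul_cancel₀ _ (by positivity)]

end HammingDistance

section Defect

variable {Γ : Type*} [Group Γ] {n : ℕ} (f : Γ → Equiv.Perm (Fin n))

lemma dH_le_defectInfty (γ₁ γ₂ : Γ) : dH (f (γ₁ * γ₂)) (f γ₁ * f γ₂) ≤ defectInfty f :=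
  le_ciSup (f := fun p : Γ × Γ => dH (f (p.1 * p.2)) (f p.1 * f p.2))
    ⟨1, by rintro _ ⟨p, rfl⟩; exact dH_le_one _ _⟩ (γ₁, γ₂)

lemma card_not_supported_le (γ t : Γ) :
    (#{x | f t (f (t⁻¹ * γ) x) ≠ f γ x} : ℝ) ≤ defectInfty f * n := by
  calc (#{x | f t (f (t⁻¹ * γ) x) ≠ f γ x} : ℝ)
      = #{x | f γ x ≠ (f t * f (t⁻¹ * γ)) x} := by
        congr 2; exact Finset.filter_congr fun x _ => ne_comm
    _ = dH (f γ) (f t * f (t⁻¹ * γ)) * n := card_ne_eq_dH_mul _ _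
    _ ≤ defectInfty f * n := by
        gcongr
        simpa using dH_le_defectInfty f t (t⁻¹ * γ)

end Defect

section Weight

variable {Γ : Type*} [Group Γ] {m : Set Γ → ℝ} {n : ℕ} (f : Γ → Equiv.Perm (Fin n))

lemma IsFinAddProb.sum_measure_not_supported_le (hm : IsFinAddProb m) (γ : Γ) :
    ∑ x, m {t | f t (f (t⁻¹ * γ) x) ≠ f γ x} ≤ defectInfty f * n :=
  hm.sum_measure_le_of_forall_card_le _ _ (card_not_supported_le f γ)

lemma IsFinAddProb.mul_card_not_weight_gt_le (hm : IsFinAddProb m) (ε : ℝ) (γ : Γ) :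
    ε * #{x | ¬ 1 - ε < weight m f x γ (f γ x)} ≤ defectInfty f * n := by
  set bad : Finset (Fin n) := {x | ¬ 1 - ε < weight m f x γ (f γ x)}
  have hbad : ∀ x ∈ bad, ε ≤ m {t | f t (f (t⁻¹ * γ) x) ≠ f γ x} := by
    intro x hx
    have hw := (Finset.mem_filter.mp hx).2
    rw [weight] at hw
    rw [← Set.compl_ofPred, hm.measure_compl]
    linarith
  calc ε * #bad = #bad • ε := by rw [nsmul_eq_mul, mul_comm]
    _ ≤ ∑ x ∈ bad, m {t | f t (f (t⁻¹ * γ) x) ≠ f γ x} := bad.card_nsmul_le_sum _ _ hbad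
    _ ≤ ∑ x, m {t | f t (f (t⁻¹ * γ) x) ≠ f γ x} :=
      Finset.sum_le_sum_of_subset_of_nonneg bad.subset_univ fun x _ _ => hm.nonneg _
    _ ≤ defectInfty f * n := hm.sum_measure_not_supported_le f γ

end Weight

theorem statement16_general {Γ : Type*} [Group Γ] (m : Set Γ → ℝ)
    (hm : IsFinAddProb m)
    {n : ℕ} (f : Γ → Equiv.Perm (Fin n)) :
    ∀ ε : ℝ, 0 < ε → ∀ γ : Γ,
      (1 - defectInfty f / ε) * n ≤
        (({ x : Fin n | 1 - ε < weight m f x γ (f γ x) }.ncard : ℝ)) := by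
  intro ε hε γ
  set good : Finset (Fin n) := {x | 1 - ε < weight m f x γ (f γ x)}
  set bad : Finset (Fin n) := {x | ¬ 1 - ε < weight m f x γ (f γ x)}
  have hsplit : (#good : ℝ) + #bad = n := by
    exact_mod_cast (Finset.card_filter_add_card_filter_not _).trans (Finset.card_fin n)
  have hncard : { x : Fin n | 1 - ε < weight m f x γ (f γ x) }.ncard = #good := by
    rw [← Set.ncard_coe_finset, Finset.coe_filter_univ]
  have hbad_le : (#bad : ℝ) ≤ defectInfty f * n / ε := by
    rw [le_div_iff₀ hε, mul_comm]
    exact hm.mul_card_not_weight_gt_le f ε γ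
  rw [hncard, sub_mul, div_mul_eq_mul_div, one_mul]
  linarith

/-- for every `γ`, at least a `(1 - δ_∞/ε)`-fraction of the points `x`
carry an edge `x →γ→ f(γ)(x)` of weight `> 1 - ε`. -/
theorem statement16 {Γ : Type*} [Group Γ] (m : Set Γ → ℝ)
    (hm : IsFinAddProb m) (hml : LeftInvariant m) (hmr : RightInvariant m)
    (hmi : InvInvariant m)
    {n : ℕ} (f : Γ → Equiv.Perm (Fin n)) (hf : IsSymmetricMap f) :
    ∀ ε : ℝ, 0 < ε → ∀ γ : Γ,
      (1 - defectInfty f / ε) * n ≤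
        (({ x : Fin n | 1 - ε < weight m f x γ (f γ x) }.ncard : ℝ)) :=
  statement16_general m hm f
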